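/- In Example 2, let θ_n = 1 − [ 3^{-1}(ξ_{N(n)+1} + e^{-u_n}) + 2 e^{-u_n} Σ_{j=0}^{J(n)} 3^{3^j − 3^{j+1}} ] / [ (ξ_{N(n)+1} + e^{-u_n}) + 2 e^{-u_n}(N(n)+1) ], where J(n) = max{ j : 3^j ≤ N(n) }, ξ_j as before, u_n → ∞, N(n) = max{j : ξ_j − ξ_{j+1} ≥ 2e^{-u_n}} → ∞. Then θ_n → 1 as n → ∞. -/

import Mathlib

/-!
For `j ≥ 1` the tail `ξ_j` is dominated by its first term `3^{-2·3^j}`, so `ξ_j` is at most twice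
the gap `ξ_j - ξ_{j+1}`. Maximality of `N(n)` makes the gap at `N(n) + 1` smaller than
`2 e^{-u_n}`, hence `ξ_{N(n)+1} < 4 e^{-u_n}`. The finite sum over `j ≤ J(n)` is bounded by a
geometric series, so the numerator of the subtracted ratio is `O(e^{-u_n})` while the denominator
is at least `2 e^{-u_n} (N(n) + 1)`; the ratio is therefore `O(1 / N(n))`, which tends to `0`.
-/

open Filter Finset

/-- The paper's `ξ_j = ∑_{i > j} 3^{3^j - 3^i}`, with `i = j + k + 1`. -/
noncomputable def xi (j : ℕ) : ℝ := ∑' k : ℕ, (1/3 : ℝ) ^ (3 ^ (j + k + 1) - 3 ^ j)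

lemma two_mul_pow_add_le_pow_sub (j k : ℕ) : 2 * 3 ^ j + k ≤ 3 ^ (j + k + 1) - 3 ^ j := by
  have hk : k < 3 ^ k := Nat.lt_pow_self (by norm_num)
  have h : 3 * 3 ^ j + k ≤ 3 ^ (j + k + 1) := by
    rw [show (3 : ℕ) ^ (j + k + 1) = 3 * 3 ^ j * 3 ^ k by ring]
    nlinarith [Nat.one_le_pow j 3 (by norm_num)]
  omega

lemma xi_term_le (j k : ℕ) :
    (1/3 : ℝ) ^ (3 ^ (j + k + 1) - 3 ^ j) ≤ (1/3 : ℝ) ^ (2 * 3 ^ j) * (1/3) ^ k := by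
  rw [← pow_add]
  exact pow_le_pow_of_le_one (by norm_num) (by norm_num) (two_mul_pow_add_le_pow_sub j k)

lemma summable_geometric_third_mul (c : ℝ) : Summable fun k : ℕ => c * (1/3 : ℝ) ^ k :=
  (summable_geometric_of_lt_one (by norm_num) (by norm_num)).mul_left c

lemma summable_xi_term (j : ℕ) : Summable fun k : ℕ => (1/3 : ℝ) ^ (3 ^ (j + k + 1) - 3 ^ j) :=
  .of_nonneg_of_le (fun _ => by positivity) (xi_term_le j) (summable_geometric_third_mul _)

lemma pow_le_xi (j : ℕ) : (1/3 : ℝ) ^ (2 * 3 ^ j) ≤ xi j := by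
  have h0 : 3 ^ (j + 0 + 1) - 3 ^ j = 2 * 3 ^ j := by rw [pow_succ]; omega
  calc (1/3 : ℝ) ^ (2 * 3 ^ j) = (1/3 : ℝ) ^ (3 ^ (j + 0 + 1) - 3 ^ j) := by rw [h0]
    _ ≤ xi j := (summable_xi_term j).le_tsum 0 fun _ _ => by positivity

lemma xi_le (j : ℕ) : xi j ≤ 3/2 * (1/3 : ℝ) ^ (2 * 3 ^ j) :=
  calc xi j ≤ ∑' k : ℕ, (1/3 : ℝ) ^ (2 * 3 ^ j) * (1/3) ^ k :=
        (summable_xi_term j).tsum_le_tsum (xi_term_le j) (summable_geometric_third_mul _)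
    _ = 3/2 * (1/3 : ℝ) ^ (2 * 3 ^ j) := by
        rw [tsum_mul_left, tsum_geometric_of_lt_one (by norm_num) (by norm_num)]
        ring

lemma xi_succ_le (j : ℕ) : xi (j + 1) ≤ 1/54 * (1/3 : ℝ) ^ (2 * 3 ^ j) := by
  have hexp : 2 * 3 ^ j + 4 ≤ 2 * 3 ^ (j + 1) := by
    rw [pow_succ]; linarith [Nat.one_le_pow j 3 (by norm_num)]
  have hpow : (1/3 : ℝ) ^ (2 * 3 ^ (j + 1)) ≤ (1/3 : ℝ) ^ (2 * 3 ^ j) * (1/3) ^ 4 := by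
    rw [← pow_add]; exact pow_le_pow_of_le_one (by norm_num) (by norm_num) hexp
  linarith [xi_le (j + 1)]

lemma xi_le_two_mul_sub_xi_succ (j : ℕ) : xi j ≤ 2 * (xi j - xi (j + 1)) := by
  linarith [pow_le_xi j, xi_succ_le j, pow_nonneg (by norm_num : (0 : ℝ) ≤ 1/3) (2 * 3 ^ j)]

lemma xi_nonneg (j : ℕ) : 0 ≤ xi j := (pow_nonneg (by norm_num) _).trans (pow_le_xi j)

lemma sum_range_pow_sub_le (n : ℕ) :
    ∑ j ∈ range n, (1/3 : ℝ) ^ (3 ^ (j + 1) - 3 ^ j) ≤ 3/2 := by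
  have hterm (j : ℕ) : (1/3 : ℝ) ^ (3 ^ (j + 1) - 3 ^ j) ≤ (1/3) ^ j := by
    refine pow_le_pow_of_le_one (by norm_num) (by norm_num) ?_
    have : j < 3 ^ j := Nat.lt_pow_self (by norm_num)
    rw [pow_succ]; omega
  calc ∑ j ∈ range n, (1/3 : ℝ) ^ (3 ^ (j + 1) - 3 ^ j)
      ≤ ∑ j ∈ Ico 0 n, (1/3 : ℝ) ^ j := by
        rw [← range_eq_Ico]; exact sum_le_sum fun j _ => hterm j
    _ ≤ (1/3 : ℝ) ^ 0 / (1 - 1/3) := geom_sum_Ico_le_of_lt_one (by norm_num) (by norm_num)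
    _ = 3/2 := by norm_num

lemma ratio_le_three_div {x e s m : ℝ} (hx₀ : 0 ≤ x) (hx : x ≤ 4 * e) (he : 0 < e)
    (hs₀ : 0 ≤ s) (hs : s ≤ 3/2) (hm : 0 ≤ m) :
    0 ≤ (1/3 * (x + e) + 2 * e * s) / ((x + e) + 2 * e * (m + 1)) ∧
      (1/3 * (x + e) + 2 * e * s) / ((x + e) + 2 * e * (m + 1)) ≤ 3 / (m + 1) := by
  have hden : 0 < (x + e) + 2 * e * (m + 1) := by positivity
  refine ⟨by positivity, ?_⟩
  rw [div_le_div_iff₀ hden (by positivity)]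
  nlinarith [mul_le_mul_of_nonneg_left hs he.le]

theorem stmt14_general
    (ξ : ℕ → ℝ)
    (hξ : ∀ j : ℕ, 1 ≤ j → ξ j = ∑' k : ℕ, (1/3 : ℝ) ^ (3 ^ (j + k + 1) - 3 ^ j))
    (u : ℕ → ℝ)
    (N : ℕ → ℕ)
    (hN : ∀ n, 2 * Real.exp (-u n) ≤ ξ (N n) - ξ (N n + 1) ∧
      ∀ j : ℕ, 2 * Real.exp (-u n) ≤ ξ j - ξ (j + 1) → j ≤ N n)
    (hNinf : Tendsto N atTop atTop)
    (J : ℕ → ℕ)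
    (θ : ℕ → ℝ)
    (hθ : ∀ n, θ n = 1 -
      ((1/3 : ℝ) * (ξ (N n + 1) + Real.exp (-u n)) +
        2 * Real.exp (-u n) * ∑ j ∈ Finset.range (J n + 1),
          (1/3 : ℝ) ^ (3 ^ (j + 1) - 3 ^ j)) /
      ((ξ (N n + 1) + Real.exp (-u n)) +
        2 * Real.exp (-u n) * ((N n : ℝ) + 1))) :
    Tendsto θ atTop (nhds 1) := by
  have hξxi (j : ℕ) : ξ (j + 1) = xi (j + 1) := hξ (j + 1) j.succ_pos
  have hξ_small (n : ℕ) : ξ (N n + 1) ≤ 4 * Real.exp (-u n) := by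
    have hgap : ξ (N n + 1) - ξ (N n + 1 + 1) < 2 * Real.exp (-u n) :=
      lt_of_not_ge fun h => (N n).lt_succ_self.not_ge ((hN n).2 _ h)
    rw [hξxi, hξxi] at hgap
    rw [hξxi]
    linarith [xi_le_two_mul_sub_xi_succ (N n + 1)]
  have hratio (n : ℕ) := ratio_le_three_div (by rw [hξxi]; exact xi_nonneg _) (hξ_small n)
    (Real.exp_pos (-u n)) (sum_nonneg fun j _ => by positivity) (sum_range_pow_sub_le (J n + 1))
    (Nat.cast_nonneg (N n))
  have hbound : Tendsto (fun n => 3 / ((N n : ℝ) + 1)) atTop (nhds 0) :=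
    (tendsto_const_nhds.div_atTop
      (tendsto_atTop_add_const_right _ 1 tendsto_natCast_atTop_atTop)).comp hNinf
  rw [funext hθ]
  simpa using tendsto_const_nhds.sub
    (squeeze_zero (fun n => (hratio n).1) (fun n => (hratio n).2) hbound)

theorem stmt14
    (z : ℝ) (hz : z = ∑' i : ℕ, (1/3 : ℝ) ^ (3 ^ (i + 1)))
    (ξ : ℕ → ℝ) (hξ0 : ξ 0 = z)
    (hξ : ∀ j : ℕ, 1 ≤ j → ξ j = ∑' k : ℕ, (1/3 : ℝ) ^ (3 ^ (j + k + 1) - 3 ^ j))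
    (u : ℕ → ℝ) (hu : Tendsto u atTop atTop)
    (N : ℕ → ℕ)
    (hN : ∀ n, 2 * Real.exp (-u n) ≤ ξ (N n) - ξ (N n + 1) ∧
      ∀ j : ℕ, 2 * Real.exp (-u n) ≤ ξ j - ξ (j + 1) → j ≤ N n)
    (hNinf : Tendsto N atTop atTop)
    (J : ℕ → ℕ)
    (hJ : ∀ n, 3 ^ (J n) ≤ N n ∧ ∀ j : ℕ, 3 ^ j ≤ N n → j ≤ J n)
    (θ : ℕ → ℝ)
    (hθ : ∀ n, θ n = 1 -
      ((1/3 : ℝ) * (ξ (N n + 1) + Real.exp (-u n)) +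
        2 * Real.exp (-u n) * ∑ j ∈ Finset.range (J n + 1),
          (1/3 : ℝ) ^ (3 ^ (j + 1) - 3 ^ j)) /
      ((ξ (N n + 1) + Real.exp (-u n)) +
        2 * Real.exp (-u n) * ((N n : ℝ) + 1))) :
    Tendsto θ atTop (nhds 1) :=
  stmt14_general ξ hξ u N hN hNinf J θ hθ
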